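/- Let k ≥ 1 and 0 ≤ i ≤ k be integers. Define Q̃_{k,i}(t) = (1/2)·C(2k,2i)·(1+t)^{2k−2i} + (1/2)·Σ_{j=i}^{k} C(2k,2j)·(1−t)^{2k−2j}·C(j,i)·(−4t)^{j−i}. Then Q̃_{k,i}(t) ≥ 0 for all real t. -/

import Mathlib

/-! The generating polynomial `∑ᵢ Q̃_{k,i}(t) xⁱ` is `(E(1+t, x) + E(1-t, x-4t))/2`, where
`2 E(a, y²) = (a+y)^{2k} + (a-y)^{2k}`. Writing `t = pq` and `x = (p+q)²` (possible over `ℂ`)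
turns the four binomials into `((1±p)(1±q))^{2k}`, so the sum is `f(p) f(q)/4` with
`f(w) = (1+w)^{2k} + (1-w)^{2k}`. Pairing the `2k`-th roots of `-1` into conjugates gives
`f(w) = ∏ₘ 2((1-cₘ) + (1+cₘ)w²)` with `cₘ = cos((2m+1)π/(2k))`, and multiplying the factors for `p`
and `q` yields `4^{k-1} ∏ₘ ((1-cₘ²) x + ((1-cₘ) - (1+cₘ) t)²)`: a product of linear polynomials in
`x` with nonnegative coefficients. -/

/-- The polynomial `Q̃_{k,i}(t)` : the `ρ* = 0` variant of `Q_{k,i}`. -/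
noncomputable def Qtilde (k i : ℕ) (t : ℝ) : ℝ :=
  (1/2) * ((2*k).choose (2*i) : ℝ) * (1+t)^(2*k-2*i)
    + (1/2) * ∑ j ∈ Finset.Icc i k,
        ((2*k).choose (2*j) : ℝ) * (1-t)^(2*k-2*j) * (j.choose i : ℝ) * (-4*t)^(j-i)

open Finset Polynomial Real

theorem Polynomial.coeff_prod_nonneg {ι R : Type*} [CommSemiring R] [PartialOrder R]
    [IsOrderedRing R] (s : Finset ι) (f : ι → R[X]) (h : ∀ i ∈ s, ∀ n, 0 ≤ (f i).coeff n)
    (n : ℕ) : 0 ≤ (∏ i ∈ s, f i).coeff n := by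
  revert n
  refine prod_induction f (fun p => ∀ n, 0 ≤ p.coeff n) (fun p q hp hq n => ?_) (fun n => ?_) h
  · rw [coeff_mul]
    exact sum_nonneg fun x _ => mul_nonneg (hp _) (hq _)
  · rw [coeff_one]
    split_ifs <;> simp

noncomputable def oddAngle (k m : ℕ) : ℝ := (2 * m + 1) * π / (2 * k)

theorem pow_add_pow_eq_prod_sub_exp_mul {k : ℕ} (hk : k ≠ 0) (a b : ℂ) :
    a ^ (2 * k) + b ^ (2 * k) =
      ∏ m ∈ range (2 * k), (a - Complex.exp (oddAngle k m * Complex.I) * b) := by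
  have hk' : ((2 * k : ℕ) : ℂ) ≠ 0 := by exact_mod_cast (by omega : 2 * k ≠ 0)
  have hζ := Complex.isPrimitiveRoot_exp (2 * k) (by omega)
  have hα : (Complex.exp (π * Complex.I / (2 * k : ℕ)) * b) ^ (2 * k) = -b ^ (2 * k) := by
    rw [mul_pow, ← Complex.exp_nat_mul, mul_div_cancel₀ _ hk', Complex.exp_pi_mul_I, neg_one_mul]
  have h := congrArg (eval a) (X_pow_sub_C_eq_prod hζ (by omega) hα)
  simp only [eval_sub, eval_pow, eval_X, eval_C, eval_prod, sub_neg_eq_add] at h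
  rw [h]
  refine prod_congr rfl fun m _ => ?_
  rw [← mul_assoc, ← Complex.exp_nat_mul, ← Complex.exp_add, oddAngle]
  congr 3
  push_cast
  field_simp

theorem pow_add_pow_eq_prod_cos {k : ℕ} (hk : k ≠ 0) (a b : ℂ) :
    a ^ (2 * k) + b ^ (2 * k) =
      ∏ m ∈ range k, (a ^ 2 - 2 * cos (oddAngle k m) * a * b + b ^ 2) := by
  rw [pow_add_pow_eq_prod_sub_exp_mul hk, two_mul, prod_range_add,
    ← prod_range_reflect (fun m => a - Complex.exp (oddAngle k (k + m) * Complex.I) * b) k,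
    ← prod_mul_distrib]
  refine prod_congr rfl fun m hm => ?_
  have hmk := mem_range.mp hm
  have hconj : Complex.exp (oddAngle k (k + (k - 1 - m)) * Complex.I) =
      Complex.exp (-(oddAngle k m * Complex.I)) := by
    rw [← Complex.exp_periodic.int_mul 1 (-(oddAngle k m * Complex.I))]
    congr 1
    simp only [oddAngle]
    push_cast [Nat.cast_sub (by omega : m ≤ k - 1), Nat.cast_sub (by omega : 1 ≤ k)]
    field_simp
    ring
  have htwo := Complex.two_cos (oddAngle k m : ℂ)
  have hinv : Complex.exp (oddAngle k m * Complex.I) *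
      Complex.exp (-(oddAngle k m * Complex.I)) = 1 := by
    rw [← Complex.exp_add, add_neg_cancel, Complex.exp_zero]
  rw [neg_mul] at htwo
  rw [hconj, Complex.ofReal_cos]
  linear_combination (a * b) * htwo + b ^ 2 * hinv

theorem sum_range_two_mul_add_one_of_odd_eq_zero {M : Type*} [AddCommMonoid M] (n : ℕ)
    (F : ℕ → M) (hF : ∀ p, Odd p → F p = 0) :
    ∑ p ∈ range (2 * n + 1), F p = ∑ j ∈ range (n + 1), F (2 * j) := by
  induction n with
  | zero => simp
  | succ n ih =>
    rw [show 2 * (n + 1) + 1 = 2 * n + 1 + 1 + 1 by ring, sum_range_succ, sum_range_succ, ih,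
      hF _ (odd_two_mul_add_one n), add_zero, sum_range_succ _ (n + 1)]
    rfl

def evenBinom {R : Type*} [CommSemiring R] (n : ℕ) (a x : R) : R :=
  ∑ j ∈ range (n + 1), ((2 * n).choose (2 * j) : R) * a ^ (2 * n - 2 * j) * x ^ j

theorem add_pow_add_sub_pow_eq_two_mul_evenBinom {R : Type*} [CommRing R] (n : ℕ) (a b : R) :
    (a + b) ^ (2 * n) + (a - b) ^ (2 * n) = 2 * evenBinom n a (b ^ 2) := by
  rw [add_comm a b, sub_eq_neg_add, add_pow, add_pow, ← sum_add_distrib,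
    sum_range_two_mul_add_one_of_odd_eq_zero, evenBinom, mul_sum]
  · refine sum_congr rfl fun j _ => ?_
    rw [(even_two_mul j).neg_pow, pow_mul]
    ring
  · intro p hp
    rw [hp.neg_pow]
    ring

theorem two_mul_evenBinom_add_evenBinom {R : Type*} [CommRing R] (n : ℕ) (p q : R) :
    2 * (evenBinom n (1 + p * q) ((p + q) ^ 2) + evenBinom n (1 - p * q) ((p - q) ^ 2)) =
      ((1 + p) ^ (2 * n) + (1 - p) ^ (2 * n)) * ((1 + q) ^ (2 * n) + (1 - q) ^ (2 * n)) := by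
  rw [mul_add, ← add_pow_add_sub_pow_eq_two_mul_evenBinom,
    ← add_pow_add_sub_pow_eq_two_mul_evenBinom,
    show 1 + p * q + (p + q) = (1 + p) * (1 + q) by ring,
    show 1 + p * q - (p + q) = (1 - p) * (1 - q) by ring,
    show 1 - p * q + (p - q) = (1 + p) * (1 - q) by ring,
    show 1 - p * q - (p - q) = (1 - p) * (1 + q) by ring]
  simp only [mul_pow]
  ring

theorem two_mul_sum_Qtilde_mul_pow (k : ℕ) (t x : ℝ) :
    2 * ∑ i ∈ range (k + 1), Qtilde k i t * x ^ i =
      evenBinom k (1 + t) x + evenBinom k (1 - t) (x - 4 * t) := by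
  set B : ℕ → ℕ → ℝ := fun i j =>
    ((2*k).choose (2*j) : ℝ) * (1-t)^(2*k-2*j) * (j.choose i : ℝ) * (-4*t)^(j-i) * x ^ i
  have hswap : ∑ i ∈ range (k + 1), ∑ j ∈ Icc i k, B i j =
      ∑ j ∈ range (k + 1), ∑ i ∈ range (j + 1), B i j :=
    sum_comm' fun i j => by simp only [mem_range, mem_Icc]; omega
  calc 2 * ∑ i ∈ range (k + 1), Qtilde k i t * x ^ i
      = ∑ i ∈ range (k + 1), (((2*k).choose (2*i) : ℝ) * (1+t)^(2*k-2*i) * x ^ i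
          + ∑ j ∈ Icc i k, B i j) := by
        rw [mul_sum]
        refine sum_congr rfl fun i _ => ?_
        simp only [Qtilde, B, ← sum_mul]
        ring
    _ = evenBinom k (1 + t) x + ∑ j ∈ range (k + 1), ∑ i ∈ range (j + 1), B i j := by
        rw [sum_add_distrib, hswap, evenBinom]
    _ = evenBinom k (1 + t) x + evenBinom k (1 - t) (x - 4 * t) := by
        rw [evenBinom]
        congr 1
        refine sum_congr rfl fun j _ => ?_
        rw [show x - 4 * t = x + -4 * t by ring, add_pow, mul_sum]
        refine sum_congr rfl fun i _ => ?_
        simp only [B]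
        ring

theorem exists_mul_eq_and_add_sq_eq (t x : ℂ) : ∃ p q : ℂ, p * q = t ∧ (p + q) ^ 2 = x := by
  obtain ⟨y, hy⟩ := IsAlgClosed.exists_pow_nat_eq x two_pos
  obtain ⟨z, hz⟩ := IsAlgClosed.exists_pow_nat_eq (x - 4 * t) two_pos
  exact ⟨(y + z) / 2, (y - z) / 2, by linear_combination (hy - hz) / 4, by linear_combination hy⟩

theorem two_mul_evenBinom_add_evenBinom_eq_prod {k : ℕ} (hk : k ≠ 0) (t x : ℂ) :
    2 * (evenBinom k (1 + t) x + evenBinom k (1 - t) (x - 4 * t)) =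
      4 ^ k * ∏ m ∈ range k, ((1 - (cos (oddAngle k m) : ℂ) ^ 2) * x +
        ((1 - (cos (oddAngle k m) : ℂ)) - (1 + (cos (oddAngle k m) : ℂ)) * t) ^ 2) := by
  obtain ⟨p, q, rfl, rfl⟩ := exists_mul_eq_and_add_sq_eq t x
  have hfactor (w : ℂ) : (1 + w) ^ (2 * k) + (1 - w) ^ (2 * k) =
      ∏ m ∈ range k,
        2 * ((1 - (cos (oddAngle k m) : ℂ)) + (1 + (cos (oddAngle k m) : ℂ)) * w ^ 2) := by
    rw [pow_add_pow_eq_prod_cos hk]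
    exact prod_congr rfl fun m _ => by ring
  rw [show (p + q) ^ 2 - 4 * (p * q) = (p - q) ^ 2 by ring, two_mul_evenBinom_add_evenBinom,
    hfactor, hfactor, ← prod_mul_distrib,
    show (4 : ℂ) ^ k = 4 ^ #(range k) by rw [card_range], pow_card_mul_prod]
  exact prod_congr rfl fun m _ => by ring

noncomputable def oddFactor (k m : ℕ) (t : ℝ) : ℝ[X] :=
  C (1 - cos (oddAngle k m) ^ 2) * X +
    C (((1 - cos (oddAngle k m)) - (1 + cos (oddAngle k m)) * t) ^ 2)

theorem oddFactor_coeff_nonneg (k m : ℕ) (t : ℝ) (n : ℕ) : 0 ≤ (oddFactor k m t).coeff n := by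
  rw [oddFactor, coeff_add, coeff_C_mul_X, coeff_C]
  have := cos_sq_le_one (oddAngle k m)
  split_ifs <;> nlinarith [sq_nonneg ((1 - cos (oddAngle k m)) - (1 + cos (oddAngle k m)) * t)]

theorem four_mul_sum_Qtilde_mul_pow {k : ℕ} (hk : k ≠ 0) (t x : ℝ) :
    4 * ∑ i ∈ range (k + 1), Qtilde k i t * x ^ i =
      4 ^ k * ∏ m ∈ range k, (oddFactor k m t).eval x := by
  have h := two_mul_evenBinom_add_evenBinom_eq_prod hk t x
  nth_rw 1 [show (4 : ℝ) = 2 * 2 by norm_num]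
  rw [mul_assoc, two_mul_sum_Qtilde_mul_pow]
  simp only [evenBinom] at h
  simp only [evenBinom, oddFactor, eval_add, eval_mul, eval_C, eval_X]
  exact_mod_cast h

theorem four_mul_Qtilde_eq_coeff_prod {k i : ℕ} (hk : k ≠ 0) (hik : i ≤ k) (t : ℝ) :
    4 * Qtilde k i t = 4 ^ k * (∏ m ∈ range k, oddFactor k m t).coeff i := by
  have hpoly : C 4 * ∑ i ∈ range (k + 1), C (Qtilde k i t) * X ^ i =
      C (4 ^ k) * ∏ m ∈ range k, oddFactor k m t :=
    Polynomial.funext fun x => by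
      simpa [eval_finsetSum, eval_prod] using four_mul_sum_Qtilde_mul_pow hk t x
  have hcoeff := congrArg (coeff · i) hpoly
  simp only [coeff_C_mul, finsetSum_coeff, coeff_X_pow, mul_ite, mul_one, mul_zero,
    sum_ite_eq] at hcoeff
  rwa [if_pos (mem_range.2 (by omega))] at hcoeff

theorem stmt_10 (k i : ℕ) (hk : 1 ≤ k) (hik : i ≤ k) (t : ℝ) :
    0 ≤ Qtilde k i t := by
  have h := four_mul_Qtilde_eq_coeff_prod (by omega) hik t
  have hcoeff := coeff_prod_nonneg (range k) _ (fun m _ => oddFactor_coeff_nonneg k m t) i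
  nlinarith [pow_pos (by norm_num : (0 : ℝ) < 4) k]
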